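/- Fix matrices A, B ∈ R^{m×n} with σ_n(A) > ‖B‖₂ (m ≥ n), a solution x* of A x − B|x| = b, and define the deterministic iteration x^{k+1} = x^k − A^T(A x^k − B|x^k| − b)/‖A‖₂². Then ‖x^k − x*‖₂² ≤ (1 − (σ_n(A)² − ‖B‖₂²)/‖A‖₂²)^k ‖x^0 − x*‖₂². -/

import Mathlib

open Matrix

/-- The `i`-th largest singular value of a real matrix (0-indexed),
defined as the `i`-th entry of the decreasingly sorted list of square roots
of the eigenvalues of `Aᴴ * A`; `0` if `i` is out of range. -/
noncomputable def sv {m n : ℕ} (A : Matrix (Fin m) (Fin n) ℝ) (i : ℕ) : ℝ :=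
  ((List.ofFn fun j : Fin n =>
      Real.sqrt ((Matrix.isHermitian_conjTranspose_mul_self A).eigenvalues j)).insertionSort
    (· ≥ ·)).getD i 0

/-- Euclidean norm of a vector. -/
noncomputable def vnorm {n : ℕ} (x : Fin n → ℝ) : ℝ := Real.sqrt (∑ i, x i ^ 2)

/-!
Write `e = x^k - x*`, `d = |x^k| - |x*|`, `σ₁ ≥ σₙ` for the extreme singular values of `A` and
`β = ‖B‖₂`. Because `x*` solves the equation, the residual is `A e - B d`, so one step maps `e`
to `e - Aᵀ(A e - B d)/σ₁²`. Expanding the square and using `‖Aᵀ r‖ ≤ σ₁ ‖r‖` gives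
`‖e'‖² ≤ ‖e‖² + (‖B d‖² - ‖A e‖²)/σ₁²`; then `‖B d‖ ≤ β ‖d‖ ≤ β ‖e‖` and `‖A e‖ ≥ σₙ ‖e‖`
give the contraction factor `1 - (σₙ² - β²)/σ₁²`, which is nonnegative since `σₙ ≤ σ₁`.
The singular value bounds come from diagonalising `AᵀA`: `‖A v‖² = ∑ λⱼ yⱼ²` for some `y` with
`‖y‖ = ‖v‖`, and `σₙ² ≤ λⱼ ≤ σ₁²`.
-/

namespace List

variable {α : Type*} [LinearOrder α] {l : List α} {a : α}

theorem le_getD_zero_insertionSort_ge (d : α) (ha : a ∈ l) :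
    a ≤ (l.insertionSort (· ≥ ·)).getD 0 d := by
  have hsorted := pairwise_insertionSort (· ≥ ·) l
  obtain ⟨i, hi, rfl⟩ := mem_iff_getElem.mp ((perm_insertionSort (· ≥ ·) l).mem_iff.mpr ha)
  rw [getD_eq_getElem _ d (by omega)]
  rcases Nat.eq_zero_or_pos i with rfl | hpos
  · exact le_rfl
  · exact hsorted.rel_get_of_lt (a := ⟨0, by omega⟩) (b := ⟨i, hi⟩) hpos

theorem getD_length_sub_one_insertionSort_ge_le (d : α) (ha : a ∈ l) :
    (l.insertionSort (· ≥ ·)).getD (l.length - 1) d ≤ a := by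
  have hsorted := pairwise_insertionSort (· ≥ ·) l
  have hlen := (perm_insertionSort (· ≥ ·) l).length_eq
  obtain ⟨i, hi, rfl⟩ := mem_iff_getElem.mp ((perm_insertionSort (· ≥ ·) l).mem_iff.mpr ha)
  have hlast : l.length - 1 < (l.insertionSort (· ≥ ·)).length := by omega
  rw [getD_eq_getElem _ d hlast]
  rcases (Nat.le_sub_one_of_lt (hlen ▸ hi)).eq_or_lt with heq | hlt
  · simp only [← heq, le_refl]
  · exact hsorted.rel_get_of_lt (a := ⟨i, hi⟩) (b := ⟨l.length - 1, hlast⟩) hlt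

end List

theorem dotProduct_self_nonneg {ι : Type*} [Fintype ι] (v : ι → ℝ) : 0 ≤ v ⬝ᵥ v :=
  Finset.sum_nonneg fun _ _ => mul_self_nonneg _

theorem dotProduct_sq_le_dotProduct_self_mul {ι : Type*} [Fintype ι] (v w : ι → ℝ) :
    (v ⬝ᵥ w) ^ 2 ≤ (v ⬝ᵥ v) * (w ⬝ᵥ w) := by
  simpa only [dotProduct, sq] using Finset.sum_mul_sq_le_sq_mul_sq Finset.univ v w

theorem abs_sub_abs_dotProduct_self_le {ι : Type*} [Fintype ι] (x y : ι → ℝ) :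
    (fun j => |x j| - |y j|) ⬝ᵥ (fun j => |x j| - |y j|) ≤ (x - y) ⬝ᵥ (x - y) :=
  Finset.sum_le_sum fun j _ => by
    show (|x j| - |y j|) * (|x j| - |y j|) ≤ (x j - y j) * (x j - y j)
    simpa only [sq] using sq_le_sq.mpr (abs_abs_sub_abs_le_abs_sub (x j) (y j))

theorem vnorm_sq {n : ℕ} (v : Fin n → ℝ) : vnorm v ^ 2 = v ⬝ᵥ v := by
  rw [vnorm, Real.sq_sqrt (Finset.sum_nonneg fun _ _ => sq_nonneg _)]
  simp only [dotProduct, sq]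

section SingularValues

variable {m n : ℕ} (A : Matrix (Fin m) (Fin n) ℝ)

theorem sv_nonneg (i : ℕ) : 0 ≤ sv A i := by
  set l := List.ofFn fun j : Fin n =>
    Real.sqrt ((isHermitian_conjTranspose_mul_self A).eigenvalues j)
  set s := l.insertionSort (· ≥ ·)
  rcases lt_or_ge i s.length with hi | hi
  · have hmem : s[i] ∈ l := (List.perm_insertionSort _ l).mem_iff.mp (s.getElem_mem hi)
    obtain ⟨j, hj⟩ := List.mem_ofFn.mp hmem
    rw [sv, List.getD_eq_getElem s 0 hi, ← hj]
    exact Real.sqrt_nonneg _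
  · rw [sv, List.getD_eq_default s 0 hi]

theorem eigenvalues_le_sv_zero_sq (j : Fin n) :
    (isHermitian_conjTranspose_mul_self A).eigenvalues j ≤ sv A 0 ^ 2 :=
  (Real.sqrt_le_left (sv_nonneg A 0)).mp
    (List.le_getD_zero_insertionSort_ge 0 (List.mem_ofFn.mpr ⟨j, rfl⟩))

theorem sv_last_sq_le_eigenvalues (j : Fin n) :
    sv A (n - 1) ^ 2 ≤ (isHermitian_conjTranspose_mul_self A).eigenvalues j := by
  set l := List.ofFn fun j : Fin n =>
    Real.sqrt ((isHermitian_conjTranspose_mul_self A).eigenvalues j)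
  have hle := List.getD_length_sub_one_insertionSort_ge_le 0 (List.mem_ofFn.mpr ⟨j, rfl⟩ : _ ∈ l)
  rw [List.length_ofFn] at hle
  exact (Real.le_sqrt (sv_nonneg A _) (eigenvalues_conjTranspose_mul_self_nonneg A j)).mp hle

theorem sv_last_le_sv_zero : sv A (n - 1) ≤ sv A 0 := by
  rcases n with _ | n
  · exact le_rfl
  · have h := (sv_last_sq_le_eigenvalues A 0).trans (eigenvalues_le_sv_zero_sq A 0)
    exact (pow_le_pow_iff_left₀ (sv_nonneg A _) (sv_nonneg A 0) two_ne_zero).mp h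

/-- `y` is the coordinate vector of `v` in an orthonormal eigenbasis of `AᵀA`. -/
theorem exists_mulVec_dotProduct_self_eq_sum_eigenvalues (v : Fin n → ℝ) :
    ∃ y : Fin n → ℝ,
      (A *ᵥ v) ⬝ᵥ (A *ᵥ v) = ∑ j, (isHermitian_conjTranspose_mul_self A).eigenvalues j * y j ^ 2 ∧
        y ⬝ᵥ y = v ⬝ᵥ v := by
  set hH := isHermitian_conjTranspose_mul_self A
  set U : Matrix (Fin n) (Fin n) ℝ := ↑hH.eigenvectorUnitary
  have hstar : star U = Uᵀ := conjTranspose_eq_transpose_of_trivial U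
  have hUUt : U * Uᵀ = 1 := hstar ▸ mem_unitaryGroup_iff.mp hH.eigenvectorUnitary.2
  refine ⟨Uᵀ *ᵥ v, ?_, ?_⟩
  · have hgram : (A *ᵥ v) ⬝ᵥ (A *ᵥ v) = v ⬝ᵥ (Aᴴ * A) *ᵥ v := by
      rw [conjTranspose_eq_transpose_of_trivial, ← mulVec_mulVec, dotProduct_mulVec v Aᵀ,
        vecMul_transpose]
    rw [hgram]
    conv_lhs => rw [hH.spectral_theorem]
    rw [Unitary.conjStarAlgAut_apply, hstar, ← mulVec_mulVec,
      ← mulVec_mulVec, dotProduct_mulVec v U, ← mulVec_transpose]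
    simp only [dotProduct, mulVec_diagonal, Function.comp_apply, RCLike.ofReal_real_eq_id, id]
    exact Finset.sum_congr rfl fun j _ => by ring
  · rw [dotProduct_mulVec, vecMul_transpose, mulVec_mulVec, hUUt, one_mulVec]

theorem mulVec_dotProduct_self_le_sv_zero_sq (v : Fin n → ℝ) :
    (A *ᵥ v) ⬝ᵥ (A *ᵥ v) ≤ sv A 0 ^ 2 * (v ⬝ᵥ v) := by
  obtain ⟨y, hAv, hy⟩ := exists_mulVec_dotProduct_self_eq_sum_eigenvalues A v
  rw [hAv, ← hy, dotProduct, Finset.mul_sum]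
  exact Finset.sum_le_sum fun j _ => by
    nlinarith [eigenvalues_le_sv_zero_sq A j, mul_self_nonneg (y j)]

theorem sv_last_sq_mul_le_mulVec_dotProduct_self (v : Fin n → ℝ) :
    sv A (n - 1) ^ 2 * (v ⬝ᵥ v) ≤ (A *ᵥ v) ⬝ᵥ (A *ᵥ v) := by
  obtain ⟨y, hAv, hy⟩ := exists_mulVec_dotProduct_self_eq_sum_eigenvalues A v
  rw [hAv, ← hy, dotProduct, Finset.mul_sum]
  exact Finset.sum_le_sum fun j _ => by
    nlinarith [sv_last_sq_le_eigenvalues A j, mul_self_nonneg (y j)]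

theorem transpose_mulVec_dotProduct_self_le_sv_zero_sq (r : Fin m → ℝ) :
    (Aᵀ *ᵥ r) ⬝ᵥ (Aᵀ *ᵥ r) ≤ sv A 0 ^ 2 * (r ⬝ᵥ r) := by
  set y := Aᵀ *ᵥ r
  have hy : (A *ᵥ y) ⬝ᵥ r = y ⬝ᵥ y := by
    rw [dotProduct_comm, dotProduct_mulVec, ← mulVec_transpose]
  have hsq : (y ⬝ᵥ y) ^ 2 ≤ sv A 0 ^ 2 * (y ⬝ᵥ y) * (r ⬝ᵥ r) :=
    calc (y ⬝ᵥ y) ^ 2 = ((A *ᵥ y) ⬝ᵥ r) ^ 2 := by rw [hy]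
      _ ≤ ((A *ᵥ y) ⬝ᵥ (A *ᵥ y)) * (r ⬝ᵥ r) := dotProduct_sq_le_dotProduct_self_mul _ _
      _ ≤ sv A 0 ^ 2 * (y ⬝ᵥ y) * (r ⬝ᵥ r) :=
        mul_le_mul_of_nonneg_right (mulVec_dotProduct_self_le_sv_zero_sq A y)
          (dotProduct_self_nonneg r)
  rcases (dotProduct_self_nonneg y).eq_or_lt with h0 | hpos
  · rw [← h0]
    exact mul_nonneg (sq_nonneg _) (dotProduct_self_nonneg r)
  · nlinarith

end SingularValues

section GradientStep

variable {m n : ℕ} (A : Matrix (Fin m) (Fin n) ℝ)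

theorem gradient_step_dotProduct_self_le (e : Fin n → ℝ) (w : Fin m → ℝ) :
    (e - (sv A 0 ^ 2)⁻¹ • Aᵀ *ᵥ (A *ᵥ e - w)) ⬝ᵥ (e - (sv A 0 ^ 2)⁻¹ • Aᵀ *ᵥ (A *ᵥ e - w)) ≤
      e ⬝ᵥ e + (w ⬝ᵥ w - (A *ᵥ e) ⬝ᵥ (A *ᵥ e)) / sv A 0 ^ 2 := by
  set t := (sv A 0 ^ 2)⁻¹
  set r := A *ᵥ e - w
  have hcross : e ⬝ᵥ Aᵀ *ᵥ r = (A *ᵥ e) ⬝ᵥ r := by rw [dotProduct_mulVec, vecMul_transpose]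
  -- `t² σ₁² = t` also when `σ₁ = 0`, where `t = 0`.
  have hquad : t ^ 2 * ((Aᵀ *ᵥ r) ⬝ᵥ (Aᵀ *ᵥ r)) ≤ t * (r ⬝ᵥ r) := by
    calc t ^ 2 * ((Aᵀ *ᵥ r) ⬝ᵥ (Aᵀ *ᵥ r)) ≤ t ^ 2 * (sv A 0 ^ 2 * (r ⬝ᵥ r)) :=
          mul_le_mul_of_nonneg_left (transpose_mulVec_dotProduct_self_le_sv_zero_sq A r)
            (sq_nonneg t)
      _ = t * (r ⬝ᵥ r) := by
          rcases eq_or_ne (sv A 0 ^ 2) 0 with h0 | h0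
          · simp [t, h0]
          · simp only [t]
            field_simp
  have hexpand : (e - t • Aᵀ *ᵥ r) ⬝ᵥ (e - t • Aᵀ *ᵥ r) =
      e ⬝ᵥ e - 2 * t * ((A *ᵥ e) ⬝ᵥ r) + t ^ 2 * ((Aᵀ *ᵥ r) ⬝ᵥ (Aᵀ *ᵥ r)) := by
    simp only [sub_dotProduct, dotProduct_sub, smul_dotProduct, dotProduct_smul, smul_eq_mul,
      dotProduct_comm (Aᵀ *ᵥ r) e, hcross]
    ring
  have hr : (A *ᵥ e) ⬝ᵥ r = (A *ᵥ e) ⬝ᵥ (A *ᵥ e) - (A *ᵥ e) ⬝ᵥ w := dotProduct_sub _ _ _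
  have hrr : r ⬝ᵥ r = (A *ᵥ e) ⬝ᵥ (A *ᵥ e) - 2 * ((A *ᵥ e) ⬝ᵥ w) + w ⬝ᵥ w := by
    simp only [r, sub_dotProduct, dotProduct_sub, dotProduct_comm w (A *ᵥ e)]
    ring
  rw [hrr] at hquad
  rw [hexpand, hr, div_eq_inv_mul]
  change _ ≤ _ + t * _
  linarith

theorem gradient_step_contraction (B : Matrix (Fin m) (Fin n) ℝ) (e d : Fin n → ℝ)
    (hd : d ⬝ᵥ d ≤ e ⬝ᵥ e) :
    (e - (sv A 0 ^ 2)⁻¹ • Aᵀ *ᵥ (A *ᵥ e - B *ᵥ d)) ⬝ᵥ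
        (e - (sv A 0 ^ 2)⁻¹ • Aᵀ *ᵥ (A *ᵥ e - B *ᵥ d)) ≤
      (1 - (sv A (n - 1) ^ 2 - sv B 0 ^ 2) / sv A 0 ^ 2) * (e ⬝ᵥ e) := by
  have hB : (B *ᵥ d) ⬝ᵥ (B *ᵥ d) ≤ sv B 0 ^ 2 * (e ⬝ᵥ e) :=
    (mulVec_dotProduct_self_le_sv_zero_sq B d).trans
      (mul_le_mul_of_nonneg_left hd (sq_nonneg _))
  have hA := sv_last_sq_mul_le_mulVec_dotProduct_self A e
  calc _ ≤ e ⬝ᵥ e + ((B *ᵥ d) ⬝ᵥ (B *ᵥ d) - (A *ᵥ e) ⬝ᵥ (A *ᵥ e)) / sv A 0 ^ 2 :=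
        gradient_step_dotProduct_self_le A e _
    _ ≤ e ⬝ᵥ e + (sv B 0 ^ 2 * (e ⬝ᵥ e) - sv A (n - 1) ^ 2 * (e ⬝ᵥ e)) / sv A 0 ^ 2 := by
        gcongr
    _ = (1 - (sv A (n - 1) ^ 2 - sv B 0 ^ 2) / sv A 0 ^ 2) * (e ⬝ᵥ e) := by ring

theorem gradient_step_rate_nonneg (B : Matrix (Fin m) (Fin n) ℝ) :
    0 ≤ 1 - (sv A (n - 1) ^ 2 - sv B 0 ^ 2) / sv A 0 ^ 2 := by
  have hle : sv A (n - 1) ^ 2 - sv B 0 ^ 2 ≤ sv A 0 ^ 2 := by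
    nlinarith [sv_last_le_sv_zero A, sv_nonneg A (n - 1), sq_nonneg (sv B 0)]
  linarith [div_le_one_of_le₀ hle (sq_nonneg (sv A 0))]

end GradientStep

theorem gradient_descent_convergence_general {m n : ℕ}
    (A B : Matrix (Fin m) (Fin n) ℝ) (b : Fin m → ℝ)
    (xs : Fin n → ℝ) (hxs : A.mulVec xs - B.mulVec (fun j => |xs j|) = b)
    (x : ℕ → Fin n → ℝ)
    (hiter : ∀ k, x (k + 1) = x k -
      (sv A 0 ^ 2)⁻¹ • Aᵀ.mulVec (A.mulVec (x k) - B.mulVec (fun j => |x k j|) - b)) :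
    ∀ k, vnorm (x k - xs) ^ 2 ≤
      (1 - (sv A (n - 1) ^ 2 - sv B 0 ^ 2) / sv A 0 ^ 2) ^ k * vnorm (x 0 - xs) ^ 2 := by
  have hstep : ∀ k, x (k + 1) - xs = (x k - xs) - (sv A 0 ^ 2)⁻¹ •
      Aᵀ *ᵥ (A *ᵥ (x k - xs) - B *ᵥ ((fun j => |x k j|) - fun j => |xs j|)) := by
    intro k
    have hres : A *ᵥ x k - B *ᵥ (fun j => |x k j|) - b =
        A *ᵥ (x k - xs) - B *ᵥ ((fun j => |x k j|) - fun j => |xs j|) := by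
      rw [← hxs, mulVec_sub, mulVec_sub]
      abel
    rw [hiter k, hres, sub_right_comm]
  intro k
  simp only [vnorm_sq]
  refine le_geom (u := fun k => (x k - xs) ⬝ᵥ (x k - xs)) (gradient_step_rate_nonneg A B) k
    fun i _ => ?_
  rw [hstep]
  exact gradient_step_contraction A B _ _ (abs_sub_abs_dotProduct_self_le _ _)

/-- Gradient-descent iteration for the GAVE: if `σ_n(A) > ‖B‖₂` and `x*` solves
`A x − B|x| = b`, then the iteration `x^{k+1} = x^k − Aᵀ(A x^k − B|x^k| − b)/‖A‖₂²`
satisfies `‖x^k − x*‖₂² ≤ (1 − (σ_n(A)² − ‖B‖₂²)/‖A‖₂²)^k ‖x^0 − x*‖₂²`. -/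
theorem gradient_descent_convergence {m n : ℕ} (hmn : n ≤ m)
    (A B : Matrix (Fin m) (Fin n) ℝ) (h : sv A (n - 1) > sv B 0) (b : Fin m → ℝ)
    (xs : Fin n → ℝ) (hxs : A.mulVec xs - B.mulVec (fun j => |xs j|) = b)
    (x : ℕ → Fin n → ℝ)
    (hiter : ∀ k, x (k + 1) = x k -
      (sv A 0 ^ 2)⁻¹ • Aᵀ.mulVec (A.mulVec (x k) - B.mulVec (fun j => |x k j|) - b)) :
    ∀ k, vnorm (x k - xs) ^ 2 ≤
      (1 - (sv A (n - 1) ^ 2 - sv B 0 ^ 2) / sv A 0 ^ 2) ^ k * vnorm (x 0 - xs) ^ 2 :=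
  gradient_descent_convergence_general A B b xs hxs x hiter
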